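/- arXiv:math/0502302 — 2 statements merged into one kernel-verified Lean document; each statement's English description precedes it below -/
import Mathlib

section
/- Let $n \ge 1$ and let $u_1 \ge u_2 \ge \cdots \ge u_n \ge 0$ be a non-increasing finite sequence of nonnegative real numbers. Then $\sum_{k=1}^{n} k\, u_k^4 \le \big( \sum_{k=1}^{n} u_k^2 \big)^2$. -/
/-- If `u 1 ≥ u 2 ≥ ⋯ ≥ u n ≥ 0` is a non-increasing finite sequence of nonnegative
reals, then `∑_{k=1}^n k * u k ^ 4 ≤ (∑_{k=1}^n u k ^ 2) ^ 2`. -/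
theorem sum_mul_pow_four_le_sq_sum_sq (n : ℕ) (hn : 1 ≤ n) (u : ℕ → ℝ)
    (hnonneg : ∀ k, 1 ≤ k → k ≤ n → 0 ≤ u k)
    (hmono : ∀ i j, 1 ≤ i → i ≤ j → j ≤ n → u j ≤ u i) :
    ∑ k ∈ Finset.Icc 1 n, (k : ℝ) * u k ^ 4 ≤ (∑ k ∈ Finset.Icc 1 n, u k ^ 2) ^ 2 := by
  have hS : 0 ≤ ∑ k ∈ Finset.Icc 1 n, u k ^ 2 :=
    Finset.sum_nonneg fun k _ => sq_nonneg _
  calc ∑ k ∈ Finset.Icc 1 n, (k : ℝ) * u k ^ 4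
      ≤ ∑ k ∈ Finset.Icc 1 n, (∑ j ∈ Finset.Icc 1 n, u j ^ 2) * u k ^ 2 := by
        apply Finset.sum_le_sum
        intro k hk
        simp only [Finset.mem_Icc] at hk
        have h1 : (k : ℝ) * u k ^ 4 = ((k : ℝ) * u k ^ 2) * u k ^ 2 := by ring
        rw [h1]
        apply mul_le_mul_of_nonneg_right _ (sq_nonneg _)
        calc (k : ℝ) * u k ^ 2 = ∑ j ∈ Finset.Icc 1 k, u k ^ 2 := by
              rw [Finset.sum_const, Nat.card_Icc]; simp
          _ ≤ ∑ j ∈ Finset.Icc 1 k, u j ^ 2 := by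
              apply Finset.sum_le_sum
              intro j hj
              simp only [Finset.mem_Icc] at hj
              have := hmono j k hj.1 hj.2 hk.2
              have hk0 := hnonneg k hk.1 hk.2
              exact pow_le_pow_left₀ hk0 this 2
          _ ≤ ∑ j ∈ Finset.Icc 1 n, u j ^ 2 := by
              apply Finset.sum_le_sum_of_subset_of_nonneg
              · exact Finset.Icc_subset_Icc_right hk.2
              · intro j _ _; exact sq_nonneg _
    _ = (∑ k ∈ Finset.Icc 1 n, u k ^ 2) ^ 2 := by
        rw [← Finset.mul_sum]; ring
end

section
/- Let $2 < r, s < \infty$ satisfy $\tfrac{1}{r} + \tfrac{1}{s} = \tfrac{1}{2}$, let $n \ge 1$, and let $u_1 \ge u_2 \ge \cdots \ge u_n \ge 0$ be a non-increasing finite sequence of nonnegative real numbers. Then $\Big( \sum_{i=1}^{n} \big( \sum_{j=i}^{n} u_j^r \big)^{s/r} \Big)^{1/s} \le \Big( \sum_{j=1}^{n} u_j^2 \Big)^{1/2}$. -/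
/-!
Since `u` is non-increasing, every term of the `i`-th tail satisfies `u j ^ r ≤ u i ^ (r - 2) * u j ^ 2`,
so the `i`-th row has `ℓ_r`-norm to the power `r` at most `u i ^ (r - 2) * S`, where `S = ∑ u j ^ 2`.
The relation `1/r + 1/s = 1/2` gives `(r - 2) * (s / r) = 2`, so raising to the power `s / r` turns this
into `u i ^ 2 * S ^ (s / r)`; summing over `i` yields `S ^ (1 + s / r) = S ^ (s / 2)`.
-/

open Finset

namespace Real

lemma rpow_le_rpow_sub_two_mul_sq {a b r : ℝ} (hb : 0 ≤ b) (hba : b ≤ a) (hr : 2 ≤ r) :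
    b ^ r ≤ a ^ (r - 2) * b ^ 2 := by
  have hsplit : b ^ r = b ^ (r - 2) * b ^ 2 := by
    rw [← rpow_two, ← rpow_add' hb (by linarith), sub_add_cancel]
  rw [hsplit]
  gcongr

lemma sum_rpow_le_rpow_sub_two_mul_sum_sq {ι : Type*} {t : Finset ι} {f : ι → ℝ} {a r : ℝ}
    (hf : ∀ i ∈ t, 0 ≤ f i ∧ f i ≤ a) (hr : 2 ≤ r) :
    ∑ i ∈ t, f i ^ r ≤ a ^ (r - 2) * ∑ i ∈ t, f i ^ 2 := by
  rw [mul_sum]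
  exact sum_le_sum fun i hi => rpow_le_rpow_sub_two_mul_sq (hf i hi).1 (hf i hi).2 hr

variable {r s : ℝ}

lemma sub_two_mul_div_eq_two (hr : r ≠ 0) (hs : s ≠ 0) (hrs : 1 / r + 1 / s = 1 / 2) :
    (r - 2) * (s / r) = 2 := by
  field_simp at hrs ⊢
  linarith

lemma one_add_div_eq_div_two (hr : r ≠ 0) (hs : s ≠ 0) (hrs : 1 / r + 1 / s = 1 / 2) :
    1 + s / r = s / 2 := by
  have := sub_two_mul_div_eq_two hr hs hrs
  field_simp at this ⊢
  linarith

lemma rpow_div_le_sq_mul_rpow_div {a S T : ℝ} (ha : 0 ≤ a) (hS : 0 ≤ S) (hT : 0 ≤ T)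
    (hr : 2 < r) (hs : 0 < s) (hrs : 1 / r + 1 / s = 1 / 2) (hTS : T ≤ a ^ (r - 2) * S) :
    T ^ (s / r) ≤ a ^ 2 * S ^ (s / r) :=
  calc T ^ (s / r) ≤ (a ^ (r - 2) * S) ^ (s / r) := by gcongr
    _ = a ^ 2 * S ^ (s / r) := by
      rw [mul_rpow (by positivity) hS, ← rpow_mul ha,
        sub_two_mul_div_eq_two (by positivity) hs.ne' hrs, rpow_two]

end Real

open Real

section Tails

variable {r s : ℝ} {n : ℕ} {u : ℕ → ℝ}

lemma tail_sum_rpow_nonneg (hnonneg : ∀ k, 1 ≤ k → k ≤ n → 0 ≤ u k) {i : ℕ} (hi : 1 ≤ i) :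
    0 ≤ ∑ j ∈ Icc i n, u j ^ r :=
  sum_nonneg fun j hj => rpow_nonneg (hnonneg j (hi.trans (mem_Icc.mp hj).1) (mem_Icc.mp hj).2) _

lemma tail_sum_rpow_le (hr : 2 ≤ r) (hnonneg : ∀ k, 1 ≤ k → k ≤ n → 0 ≤ u k)
    (hmono : ∀ i j, 1 ≤ i → i ≤ j → j ≤ n → u j ≤ u i) {i : ℕ} (hi : i ∈ Icc 1 n) :
    ∑ j ∈ Icc i n, u j ^ r ≤ u i ^ (r - 2) * ∑ j ∈ Icc 1 n, u j ^ 2 := by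
  obtain ⟨hi1, hin⟩ := mem_Icc.mp hi
  refine (sum_rpow_le_rpow_sub_two_mul_sum_sq (a := u i) (fun j hj => ?_) hr).trans ?_
  · obtain ⟨hij, hjn⟩ := mem_Icc.mp hj
    exact ⟨hnonneg j (hi1.trans hij) hjn, hmono i j hi1 hij hjn⟩
  · have hui := hnonneg i hi1 hin
    gcongr

lemma sum_tail_sum_rpow_le (hr : 2 < r) (hs : 0 < s) (hrs : 1 / r + 1 / s = 1 / 2)
    (hnonneg : ∀ k, 1 ≤ k → k ≤ n → 0 ≤ u k)
    (hmono : ∀ i j, 1 ≤ i → i ≤ j → j ≤ n → u j ≤ u i) :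
    ∑ i ∈ Icc 1 n, (∑ j ∈ Icc i n, u j ^ r) ^ (s / r) ≤ (∑ j ∈ Icc 1 n, u j ^ 2) ^ (s / 2) := by
  set S := ∑ j ∈ Icc 1 n, u j ^ 2
  have hS : 0 ≤ S := sum_nonneg fun j _ => sq_nonneg _
  have row_le (i : ℕ) (hi : i ∈ Icc 1 n) :
      (∑ j ∈ Icc i n, u j ^ r) ^ (s / r) ≤ u i ^ 2 * S ^ (s / r) :=
    rpow_div_le_sq_mul_rpow_div (hnonneg i (mem_Icc.mp hi).1 (mem_Icc.mp hi).2) hS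
      (tail_sum_rpow_nonneg hnonneg (mem_Icc.mp hi).1) hr hs hrs
      (tail_sum_rpow_le hr.le hnonneg hmono hi)
  calc _ ≤ ∑ i ∈ Icc 1 n, u i ^ 2 * S ^ (s / r) := sum_le_sum row_le
    _ = S ^ (1 + s / r) := by rw [← sum_mul, rpow_add' hS (by positivity), rpow_one]
    _ = S ^ (s / 2) := by rw [one_add_div_eq_div_two (by positivity) hs.ne' hrs]

end Tails

theorem lp_tail_triangle_ineq_general (r s : ℝ) (hr : 2 < r) (hs : 2 < s)
    (hrs : 1 / r + 1 / s = 1 / 2) (n : ℕ) (u : ℕ → ℝ)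
    (hnonneg : ∀ k, 1 ≤ k → k ≤ n → 0 ≤ u k)
    (hmono : ∀ i j, 1 ≤ i → i ≤ j → j ≤ n → u j ≤ u i) :
    (∑ i ∈ Finset.Icc 1 n, (∑ j ∈ Finset.Icc i n, u j ^ r) ^ (s / r)) ^ (1 / s)
      ≤ (∑ j ∈ Finset.Icc 1 n, u j ^ 2) ^ ((1 : ℝ) / 2) := by
  have hs0 : 0 < s := by positivity
  have hS : 0 ≤ ∑ j ∈ Icc 1 n, u j ^ 2 := sum_nonneg fun j _ => sq_nonneg _
  calc _ ≤ ((∑ j ∈ Icc 1 n, u j ^ 2) ^ (s / 2)) ^ (1 / s) := by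
        gcongr
        · exact sum_nonneg fun i hi =>
            rpow_nonneg (tail_sum_rpow_nonneg hnonneg (mem_Icc.mp hi).1) _
        · exact sum_tail_sum_rpow_le hr hs0 hrs hnonneg hmono
    _ = (∑ j ∈ Icc 1 n, u j ^ 2) ^ ((1 : ℝ) / 2) := by
        rw [← rpow_mul hS]
        congr 1
        field_simp

/-- For `2 < r, s < ∞` with `1/r + 1/s = 1/2` and a non-increasing sequence
`u 1 ≥ ⋯ ≥ u n ≥ 0`, the `ℓ_s(ℓ_r)` norm of the triangular array of tails
is at most the `ℓ_2` norm of `u`. -/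
theorem lp_tail_triangle_ineq (r s : ℝ) (hr : 2 < r) (hs : 2 < s)
    (hrs : 1 / r + 1 / s = 1 / 2) (n : ℕ) (hn : 1 ≤ n) (u : ℕ → ℝ)
    (hnonneg : ∀ k, 1 ≤ k → k ≤ n → 0 ≤ u k)
    (hmono : ∀ i j, 1 ≤ i → i ≤ j → j ≤ n → u j ≤ u i) :
    (∑ i ∈ Finset.Icc 1 n, (∑ j ∈ Finset.Icc i n, u j ^ r) ^ (s / r)) ^ (1 / s)
      ≤ (∑ j ∈ Finset.Icc 1 n, u j ^ 2) ^ ((1 : ℝ) / 2) :=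
  lp_tail_triangle_ineq_general r s hr hs hrs n u hnonneg hmono
end
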